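/- arXiv:2407.16293 — 7 statements merged into one kernel-verified Lean document; each statement's English description precedes it below -/
import Mathlib

section
/- Let Y ∈ ℝ^{n×m} and η ≥ 0. Let X = BP^{1,∞}_η(Y) be the bi-level projection: u = P¹_η(v) where v_j = ‖y_j‖_∞ is the vector of column-wise max norms, and x_j = P^∞_{u_j}(y_j) for each column j. Then ‖Y − X‖_{1,∞} + ‖X‖_{1,∞} = ‖Y‖_{1,∞}, where ‖A‖_{1,∞} = Σ_j max_i |A_{i,j}|. -/
open Finset

/-- ℓ1 norm of a vector. -/
def l1 {k : ℕ} (v : Fin k → ℝ) : ℝ := ∑ j, |v j|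

/-- ℓ∞ (max) norm of a vector. -/
noncomputable def linf {k : ℕ} [NeZero k] (v : Fin k → ℝ) : ℝ :=
  Finset.univ.sup' Finset.univ_nonempty fun i => |v i|

/-- Euclidean (ℓ2) norm of a vector. -/
noncomputable def l2 {k : ℕ} (v : Fin k → ℝ) : ℝ := Real.sqrt (∑ i, (v i) ^ 2)

/-- Euclidean distance between two vectors. -/
noncomputable def dE {k : ℕ} (x y : Fin k → ℝ) : ℝ := l2 (fun i => x i - y i)

/-- `x` is the Euclidean projection of `y` onto the set `S`. -/
noncomputable def IsProjOn {k : ℕ} (S : Set (Fin k → ℝ)) (y x : Fin k → ℝ) : Prop :=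
  x ∈ S ∧ ∀ z ∈ S, dE x y ≤ dE z y

/-- The ℓ1 ball of radius `t`. -/
def B1 {k : ℕ} (t : ℝ) : Set (Fin k → ℝ) := {v | l1 v ≤ t}

/-- The ℓ∞ ball of radius `t`. -/
def Binf {k : ℕ} [NeZero k] (t : ℝ) : Set (Fin k → ℝ) := {v | linf v ≤ t}

/-- The ℓ2 ball of radius `t`. -/
def B2 {k : ℕ} (t : ℝ) : Set (Fin k → ℝ) := {v | l2 v ≤ t}

/-- Entrywise clipping of a vector at level `t`. -/
noncomputable def clip {k : ℕ} (y : Fin k → ℝ) (t : ℝ) : Fin k → ℝ :=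
  fun i => Real.sign (y i) * min |y i| t

/-- `j`-th column of a matrix. -/
def col {n m : ℕ} (Y : Fin n → Fin m → ℝ) (j : Fin m) : Fin n → ℝ := fun i => Y i j

/-- ℓ_{1,∞} matrix norm: sum over columns of the max norm. -/
noncomputable def l1inf {n m : ℕ} [NeZero n] (Y : Fin n → Fin m → ℝ) : ℝ :=
  ∑ j, linf (col Y j)

/-- ℓ_{∞,1} matrix norm: max over columns of the ℓ1 norm. -/
noncomputable def linf1 {n m : ℕ} [NeZero m] (Y : Fin n → Fin m → ℝ) : ℝ :=
  Finset.univ.sup' Finset.univ_nonempty fun j => ∑ i, |Y i j|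

/-- ℓ_{1,1} matrix norm. -/
def l11 {n m : ℕ} (Y : Fin n → Fin m → ℝ) : ℝ := ∑ j, ∑ i, |Y i j|

/-- ℓ_{1,2} matrix norm: sum of column ℓ2 norms. -/
noncomputable def l12 {n m : ℕ} (Y : Fin n → Fin m → ℝ) : ℝ := ∑ j, l2 (col Y j)

/-- Frobenius inner product. -/
def frobInner {n m : ℕ} (Y Z : Fin n → Fin m → ℝ) : ℝ := ∑ i, ∑ j, Y i j * Z i j

/-- Squared Frobenius distance. -/
def frobDist2 {n m : ℕ} (X Y : Fin n → Fin m → ℝ) : ℝ := ∑ i, ∑ j, (X i j - Y i j) ^ 2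



lemma clamp_sq_le (u v : ℝ) (hv : 0 ≤ v) : (min (max u 0) v - v)^2 ≤ (u - v)^2 := by
  rcases le_total u 0 with h|h
  · rw [max_eq_right h, min_eq_left hv]; nlinarith
  · rw [max_eq_left h]
    rcases le_total u v with h2|h2
    · rw [min_eq_left h2]
    · rw [min_eq_right h2]; nlinarith

lemma clamp_sq_eq (u v : ℝ) (hv : 0 ≤ v) (h : (min (max u 0) v - v)^2 = (u - v)^2) :
    0 ≤ u ∧ u ≤ v := by
  constructor
  · by_contra h'
    push_neg at h'
    rw [max_eq_right h'.le, min_eq_left hv] at h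
    nlinarith
  · by_contra h'
    push_neg at h'
    have h0 : 0 ≤ u := le_trans hv h'.le
    rw [max_eq_left h0, min_eq_right h'.le] at h
    nlinarith

lemma abs_sub_clip (y t : ℝ) (ht : 0 ≤ t) :
    |y - Real.sign y * min |y| t| = |y| - min |y| t := by
  rcases lt_trichotomy y 0 with h|h|h
  · rw [Real.sign_of_neg h, abs_of_neg h]
    have h1 : min (-y) t ≤ -y := min_le_left _ _
    rw [abs_of_nonpos (by nlinarith [min_le_left (-y) t])]
    ring
  · simp [h, ht, min_eq_left (le_refl (0:ℝ))]
  · rw [Real.sign_of_pos h, abs_of_pos h]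
    have h1 : min y t ≤ y := min_le_left _ _
    rw [abs_of_nonneg (by nlinarith)]
    ring

theorem stmt3 {n m : ℕ} [NeZero n] (Y : Fin n → Fin m → ℝ) (η : ℝ) (hη : 0 ≤ η)
    (u : Fin m → ℝ) (hu : IsProjOn (B1 η) (fun j => linf (col Y j)) u)
    (X : Fin n → Fin m → ℝ)
    (hX : ∀ i j, X i j = Real.sign (Y i j) * min |Y i j| (u j)) :
    l1inf (fun i j => Y i j - X i j) + l1inf X = l1inf Y := by
  obtain ⟨huB, humin⟩ := hu
  set v : Fin m → ℝ := fun j => linf (col Y j) with hv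
  have hvnonneg : ∀ j, 0 ≤ v j := by
    intro j
    have : |Y 0 j| ≤ v j := Finset.le_sup' (fun i => |Y i j|) (Finset.mem_univ 0)
    exact le_trans (abs_nonneg _) this
  -- the clamped vector
  set z : Fin m → ℝ := fun j => min (max (u j) 0) (v j) with hz
  have hzmem : z ∈ B1 η := by
    have hle : ∀ j, |z j| ≤ |u j| := by
      intro j
      have h0 : 0 ≤ z j := le_min (le_max_right _ _) (hvnonneg j)
      rw [abs_of_nonneg h0]
      exact le_trans (min_le_left _ _) (max_le (le_abs_self _) (abs_nonneg _))
    have : l1 z ≤ l1 u := Finset.sum_le_sum fun j _ => hle j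
    exact le_trans this huB
  have hsumle : ∀ j, (z j - v j)^2 ≤ (u j - v j)^2 := fun j => clamp_sq_le _ _ (hvnonneg j)
  have hdle : dE z v ≤ dE u v := by
    unfold dE l2
    exact Real.sqrt_le_sqrt (Finset.sum_le_sum fun j _ => hsumle j)
  have hdge : dE u v ≤ dE z v := humin z hzmem
  have hsumeq : ∑ j, (z j - v j)^2 = ∑ j, (u j - v j)^2 := by
    have h1 : dE z v = dE u v := le_antisymm hdle hdge
    unfold dE l2 at h1
    have h2 : (0:ℝ) ≤ ∑ j, (z j - v j)^2 := Finset.sum_nonneg fun j _ => sq_nonneg _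
    have h3 : (0:ℝ) ≤ ∑ j, (u j - v j)^2 := Finset.sum_nonneg fun j _ => sq_nonneg _
    calc ∑ j, (z j - v j)^2 = Real.sqrt (∑ j, (z j - v j)^2) ^ 2 := (Real.sq_sqrt h2).symm
      _ = Real.sqrt (∑ j, (u j - v j)^2) ^ 2 := by rw [h1]
      _ = ∑ j, (u j - v j)^2 := Real.sq_sqrt h3
  have htermeq : ∀ j, (z j - v j)^2 = (u j - v j)^2 := by
    intro j
    have := (Finset.sum_eq_sum_iff_of_le (fun j _ => hsumle j)).mp hsumeq j (Finset.mem_univ j)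
    exact this
  have hbound : ∀ j, 0 ≤ u j ∧ u j ≤ v j := fun j => clamp_sq_eq _ _ (hvnonneg j) (htermeq j)
  -- now the column identity
  unfold l1inf
  rw [← Finset.sum_add_distrib]
  apply Finset.sum_congr rfl
  intro j _
  obtain ⟨hu0, huv⟩ := hbound j
  obtain ⟨i0, _, hi0⟩ := Finset.exists_mem_eq_sup' (Finset.univ_nonempty) (fun i => |Y i j|)
  have hvj : v j = |Y i0 j| := hi0
  have habsX : ∀ i, |X i j| = min |Y i j| (u j) := by
    intro i
    rw [hX i j]
    rcases eq_or_ne (Y i j) 0 with h|h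
    · simp [h, min_eq_left hu0]
    · have hs : |Real.sign (Y i j)| = 1 := by
        rcases h.lt_or_gt with h'|h'
        · rw [Real.sign_of_neg h']; norm_num
        · rw [Real.sign_of_pos h']; norm_num
      rw [abs_mul, hs, one_mul, abs_of_nonneg (le_min (abs_nonneg _) hu0)]
  have habsYX : ∀ i, |Y i j - X i j| = |Y i j| - min |Y i j| (u j) := by
    intro i
    rw [hX i j]
    exact abs_sub_clip _ _ hu0
  have hub : ∀ i, |Y i j| ≤ v j := fun i => Finset.le_sup' (fun i => |Y i j|) (Finset.mem_univ i)
  have hXcol : linf (col X j) = u j := by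
    unfold linf col
    apply le_antisymm
    · apply Finset.sup'_le
      intro i _
      rw [habsX i]
      exact min_le_right _ _
    · have : |X i0 j| = u j := by
        rw [habsX i0, min_eq_right (by rw [← hvj]; exact huv)]
      rw [← this]
      exact Finset.le_sup' (fun i => |X i j|) (Finset.mem_univ i0)
  have hYXcol : linf (col (fun i j => Y i j - X i j) j) = v j - u j := by
    unfold linf col
    apply le_antisymm
    · apply Finset.sup'_le
      intro i _
      rw [habsYX i]
      rcases le_total |Y i j| (u j) with h|h
      · rw [min_eq_left h]; linarith
      · rw [min_eq_right h]; linarith [hub i]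
    · have : |Y i0 j - X i0 j| = v j - u j := by
        rw [habsYX i0, min_eq_right (by rw [← hvj]; exact huv), hvj]
      rw [← this]
      exact Finset.le_sup' (fun i => |Y i j - X i j|) (Finset.mem_univ i0)
  rw [hXcol, hYXcol]
  ring
end

section
/- Let Y ∈ ℝ^{n×m}, and let u ∈ ℝᵐ satisfy 0 ≤ u_j ≤ max_i |Y_{i,j}| for all j. Define X by X_{i,j} = sign(Y_{i,j})·min(|Y_{i,j}|, u_j) (column-wise clipping). Then ‖Y − X‖_{1,∞} + ‖X‖_{1,∞} = ‖Y‖_{1,∞}. -/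
open Finset

lemma abs_clip (a u : ℝ) (h0 : 0 ≤ u) :
    |Real.sign a * min |a| u| = min |a| u := by
  rcases lt_trichotomy a 0 with h|h|h
  · rw [Real.sign_of_neg h, neg_one_mul, abs_neg,
      abs_of_nonneg (le_min (abs_nonneg a) h0)]
  · simp [h, min_eq_left h0]
  · rw [Real.sign_of_pos h, one_mul, abs_of_nonneg (le_min (abs_nonneg a) h0)]

lemma abs_residual (a u : ℝ) (h0 : 0 ≤ u) :
    |a - Real.sign a * min |a| u| = |a| - min |a| u := by
  rcases lt_trichotomy a 0 with h|h|h
  · have hm : min (-a) u ≤ -a := min_le_left _ _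
    rw [Real.sign_of_neg h, abs_of_neg h, neg_one_mul, sub_neg_eq_add,
      abs_of_nonpos (by linarith)]
    ring
  · simp [h, min_eq_left h0]
  · rw [Real.sign_of_pos h, abs_of_pos h, one_mul, abs_of_nonneg]
    have : min a u ≤ a := min_le_left _ _
    linarith

lemma col_key {n : ℕ} [NeZero n] (y : Fin n → ℝ) (u : ℝ) (h0 : 0 ≤ u)
    (h1 : u ≤ linf y) :
    linf (fun i => y i - Real.sign (y i) * min |y i| u) +
      linf (fun i => Real.sign (y i) * min |y i| u) = linf y := by
  obtain ⟨i0, -, hi0⟩ := Finset.exists_mem_eq_sup' (Finset.univ_nonempty (α := Fin n))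
    (fun i => |y i|)
  have hL : linf y = |y i0| := hi0
  have hmax : ∀ i, |y i| ≤ |y i0| := by
    intro i
    rw [← hL]
    exact Finset.le_sup' (fun i => |y i|) (Finset.mem_univ i)
  have hui0 : u ≤ |y i0| := hL ▸ h1
  have hA : linf (fun i => y i - Real.sign (y i) * min |y i| u) = |y i0| - u := by
    apply le_antisymm
    · apply Finset.sup'_le
      intro i _
      rw [abs_residual _ _ h0]
      rcases le_total |y i| u with h|h
      · simp only [min_eq_left h]
        nlinarith [hmax i]
      · simp only [min_eq_right h]
        linarith [hmax i]
    · have := Finset.le_sup' (f := fun i => |y i - Real.sign (y i) * min |y i| u|)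
        (Finset.mem_univ i0)
      rw [abs_residual _ _ h0, min_eq_right hui0] at this
      exact this
  have hB : linf (fun i => Real.sign (y i) * min |y i| u) = u := by
    apply le_antisymm
    · apply Finset.sup'_le
      intro i _
      rw [abs_clip _ _ h0]
      exact min_le_right _ _
    · have := Finset.le_sup' (f := fun i => |Real.sign (y i) * min |y i| u|)
        (Finset.mem_univ i0)
      rw [abs_clip _ _ h0, min_eq_right hui0] at this
      exact this
  rw [hA, hB, hL]
  ring

theorem stmt4 {n m : ℕ} [NeZero n] (Y : Fin n → Fin m → ℝ) (u : Fin m → ℝ)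
    (hu : ∀ j, 0 ≤ u j ∧ u j ≤ linf (col Y j))
    (X : Fin n → Fin m → ℝ)
    (hX : ∀ i j, X i j = Real.sign (Y i j) * min |Y i j| (u j)) :
    l1inf (fun i j => Y i j - X i j) + l1inf X = l1inf Y := by
  unfold l1inf
  rw [← Finset.sum_add_distrib]
  apply Finset.sum_congr rfl
  intro j _
  have h1 : col (fun i j => Y i j - X i j) j = fun i => Y i j - Real.sign (Y i j) * min |Y i j| (u j) := by
    funext i; simp [col, hX]
  have h2 : col X j = fun i => Real.sign (Y i j) * min |Y i j| (u j) := by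
    funext i; simp [col, hX]
  rw [h1, h2]
  exact col_key (fun i => Y i j) (u j) (hu j).1 (hu j).2
end

section
/- Let Y ∈ ℝ^{n×m} and η ≥ 0. Let X = BP^{1,1}_η(Y) be defined by: u = P¹_η(v) where v_j = ‖y_j‖₁ is the vector of column ℓ¹ norms, and x_j = P¹_{u_j}(y_j) is the Euclidean projection of column y_j onto the ℓ¹ ball of radius u_j. Then ‖Y − X‖_{1,1} + ‖X‖_{1,1} = ‖Y‖_{1,1}, where ‖A‖_{1,1} = Σ_{i,j} |A_{i,j}|. -/
open Finset

-- helper: updating one coordinate to a better value strictly improves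
lemma update_better {k : ℕ} (t : ℝ) (y x : Fin k → ℝ)
    (hmem : x ∈ B1 t) (hopt : ∀ z ∈ B1 t, dE x y ≤ dE z y)
    (i : Fin k) (c : ℝ) (hc : |c| ≤ |x i|)
    (hlt : (c - y i)^2 < (x i - y i)^2) : False := by
  set z := Function.update x i c with hz
  have herase : ∀ (g : ℝ → Fin k → ℝ), True := fun _ => trivial
  have hmemz : z ∈ B1 t := by
    have : l1 z ≤ l1 x := by
      unfold l1
      rw [← Finset.add_sum_erase _ _ (Finset.mem_univ i),
          ← Finset.add_sum_erase _ (fun j => |x j|) (Finset.mem_univ i)]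
      have : ∑ j ∈ Finset.univ.erase i, |z j| = ∑ j ∈ Finset.univ.erase i, |x j| := by
        apply Finset.sum_congr rfl
        intro j hj
        rw [hz, Function.update_of_ne (Finset.ne_of_mem_erase hj)]
      rw [this]
      simp only [hz, Function.update_self]
      linarith
    exact this.trans hmem
  have hdlt : dE z y < dE x y := by
    unfold dE l2
    apply Real.sqrt_lt_sqrt (by positivity)
    rw [← Finset.add_sum_erase _ _ (Finset.mem_univ i),
        ← Finset.add_sum_erase _ (fun j => (x j - y j)^2) (Finset.mem_univ i)]
    have he : ∑ j ∈ Finset.univ.erase i, (z j - y j)^2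
        = ∑ j ∈ Finset.univ.erase i, (x j - y j)^2 := by
      apply Finset.sum_congr rfl
      intro j hj
      rw [hz, Function.update_of_ne (Finset.ne_of_mem_erase hj)]
    rw [he]
    simp only [hz, Function.update_self]
    linarith
  exact absurd (hopt z hmemz) (not_le.mpr hdlt)

lemma proj_coord {k : ℕ} (t : ℝ) (y x : Fin k → ℝ)
    (h : IsProjOn (B1 t) y x) (i : Fin k) :
    |y i - x i| + |x i| = |y i| := by
  obtain ⟨hmem, hopt⟩ := h
  have ha_def : min 0 (y i) = min 0 (y i) := rfl
  have ha : min 0 (y i) ≤ 0 := min_le_left _ _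
  have hb : 0 ≤ max 0 (y i) := le_max_left _ _
  have hay : min 0 (y i) ≤ y i := min_le_right _ _
  have hyb : y i ≤ max 0 (y i) := le_max_right _ _
  have hin : min 0 (y i) ≤ x i ∧ x i ≤ max 0 (y i) := by
    constructor
    · by_contra hxa
      push_neg at hxa
      refine update_better t y x hmem hopt i (min 0 (y i)) ?_ ?_
      · rw [abs_of_nonpos ha, abs_of_nonpos (hxa.le.trans ha)]; linarith
      · nlinarith
    · by_contra hxb
      push_neg at hxb
      refine update_better t y x hmem hopt i (max 0 (y i)) ?_ ?_
      · rw [abs_of_nonneg hb, abs_of_nonneg (hb.trans hxb.le)]; linarith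
      · nlinarith
  obtain ⟨h1, h2⟩ := hin
  rcases le_total 0 (y i) with hy | hy
  · rw [min_eq_left hy] at h1
    rw [max_eq_right hy] at h2
    rw [abs_of_nonneg (by linarith : (0:ℝ) ≤ y i - x i),
      abs_of_nonneg h1, abs_of_nonneg hy]
    ring
  · rw [min_eq_right hy] at h1
    rw [max_eq_left hy] at h2
    rw [abs_of_nonpos (by linarith : y i - x i ≤ 0),
      abs_of_nonpos h2, abs_of_nonpos hy]
    ring


theorem stmt6 {n m : ℕ} (Y : Fin n → Fin m → ℝ) (η : ℝ) (hη : 0 ≤ η)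
    (u : Fin m → ℝ) (hu : IsProjOn (B1 η) (fun j => l1 (col Y j)) u)
    (X : Fin n → Fin m → ℝ)
    (hX : ∀ j, IsProjOn (B1 (u j)) (col Y j) (col X j)) :
    l11 (fun i j => Y i j - X i j) + l11 X = l11 Y := by
  have key : ∀ j i, |Y i j - X i j| + |X i j| = |Y i j| := fun j i =>
    proj_coord (u j) (col Y j) (col X j) (hX j) i
  simp only [l11, ← Finset.sum_add_distrib]
  exact Finset.sum_congr rfl fun j _ => Finset.sum_congr rfl fun i _ => key j i
end

section
/- Let Y ∈ ℝ^{n×m} and η ≥ 0, and let X = BP^{1,∞}_η(Y) be the bi-level projection. Then ‖X‖_{1,∞} ≤ η; moreover if ‖Y‖_{1,∞} ≥ η then ‖X‖_{1,∞} = η. -/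
open Finset

-- helper lemma: strict improvement contradiction
lemma proj_contra {k : ℕ} {η : ℝ} {v u : Fin k → ℝ}
    (hu : IsProjOn (B1 η) v u) (j : Fin k) (c : ℝ)
    (h1 : l1 (Function.update u j c) ≤ η)
    (h2 : (c - v j) ^ 2 < (u j - v j) ^ 2) : False := by
  set z := Function.update u j c with hz
  have hmem : z ∈ B1 η := h1
  have hle := hu.2 z hmem
  have hsum : ∑ i, (z i - v i) ^ 2 < ∑ i, (u i - v i) ^ 2 := by
    apply Finset.sum_lt_sum
    · intro i _
      by_cases hij : i = j
      · subst hij; simpa [hz, Function.update_self] using le_of_lt h2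
      · simp [hz, Function.update_of_ne hij]
    · exact ⟨j, Finset.mem_univ j, by simpa [hz, Function.update_self] using h2⟩
  have : dE z v < dE u v := by
    unfold dE l2
    exact Real.sqrt_lt_sqrt (Finset.sum_nonneg fun i _ => sq_nonneg _) hsum
  exact absurd hle (not_le.mpr this)

lemma l1_update {k : ℕ} (u : Fin k → ℝ) (j : Fin k) (c : ℝ) :
    l1 (Function.update u j c) = l1 u - |u j| + |c| := by
  unfold l1
  have hpt : ∀ x, |Function.update u j c x| = Function.update (fun i => |u i|) j |c| x := by
    intro x
    by_cases h : x = j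
    · subst h; simp
    · simp [Function.update_of_ne h]
  rw [Finset.sum_congr rfl fun x _ => hpt x]
  rw [Finset.sum_update_of_mem (Finset.mem_univ j)]
  rw [← Finset.add_sum_erase Finset.univ (fun i => |u i|) (Finset.mem_univ j)]
  rw [Finset.sdiff_singleton_eq_erase]
  ring


theorem stmt10 {n m : ℕ} [NeZero n] (Y : Fin n → Fin m → ℝ) (η : ℝ) (hη : 0 ≤ η)
    (u : Fin m → ℝ) (hu : IsProjOn (B1 η) (fun j => linf (col Y j)) u)
    (X : Fin n → Fin m → ℝ)
    (hX : ∀ i j, X i j = Real.sign (Y i j) * min |Y i j| (u j)) :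
    l1inf X ≤ η ∧ (η ≤ l1inf Y → l1inf X = η) := by
  set v : Fin m → ℝ := fun j => linf (col Y j) with hv
  have hv0 : ∀ j, 0 ≤ v j := by
    intro j
    obtain ⟨i0⟩ := (inferInstance : Nonempty (Fin n))
    exact le_trans (abs_nonneg (Y i0 j))
      (Finset.le_sup' (fun i => |col Y j i|) (Finset.mem_univ i0))
  have hvle : ∀ j i, |Y i j| ≤ v j := fun j i =>
    Finset.le_sup' (fun i => |col Y j i|) (Finset.mem_univ i)
  have hl1u : l1 u ≤ η := hu.1
  -- u j ≥ 0
  have hun : ∀ j, 0 ≤ u j := by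
    intro j
    by_contra hneg
    push_neg at hneg
    refine proj_contra hu j 0 ?_ ?_
    · rw [l1_update]; simp; nlinarith [abs_nonneg (u j)]
    · have := hv0 j; nlinarith
  -- u j ≤ v j
  have huv : ∀ j, u j ≤ v j := by
    intro j
    by_contra hgt
    push_neg at hgt
    refine proj_contra hu j (v j) ?_ ?_
    · rw [l1_update]
      have h1 : |v j| ≤ |u j| := by
        rw [abs_of_nonneg (hv0 j), abs_of_nonneg (hun j)]; linarith
      linarith
    · have : 0 < u j - v j := by linarith
      nlinarith
  -- |X i j| = min |Y i j| (u j)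
  have habsX : ∀ i j, |X i j| = min |Y i j| (u j) := by
    intro i j
    rw [hX i j, abs_mul]
    rcases lt_trichotomy (Y i j) 0 with h | h | h
    · rw [Real.sign_of_neg h]
      rw [abs_of_nonneg (le_min (abs_nonneg _) (hun j))]
      simp
    · simp [h, Real.sign_zero, min_eq_left (hun j)]
    · rw [Real.sign_of_pos h]
      rw [abs_of_nonneg (le_min (abs_nonneg _) (hun j))]
      simp
  -- linf (col X j) = u j
  have hlinfX : ∀ j, linf (col X j) = u j := by
    intro j
    apply le_antisymm
    · apply Finset.sup'_le
      intro i _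
      simp only [col, habsX i j]
      exact min_le_right _ _
    · obtain ⟨i0, _, hi0⟩ := Finset.exists_mem_eq_sup' (Finset.univ_nonempty (α := Fin n))
        (fun i => |col Y j i|)
      have hmin : min |Y i0 j| (u j) = u j := by
        apply min_eq_right
        have : |Y i0 j| = v j := hi0.symm
        rw [this]; exact huv j
      calc u j = min |Y i0 j| (u j) := hmin.symm
        _ = |col X j i0| := (habsX i0 j).symm
        _ ≤ linf (col X j) := Finset.le_sup' (fun i => |col X j i|) (Finset.mem_univ i0)
  have hXeq : l1inf X = l1 u := by
    unfold l1inf l1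
    apply Finset.sum_congr rfl
    intro j _
    rw [hlinfX j, abs_of_nonneg (hun j)]
  constructor
  · rw [hXeq]; exact hl1u
  · intro hY
    rw [hXeq]
    by_contra hne
    have hlt : l1 u < η := lt_of_le_of_ne hl1u hne
    have hYv : l1inf Y = ∑ j, v j := rfl
    have hvsum : l1 u = ∑ j, u j := by
      unfold l1; exact Finset.sum_congr rfl fun j _ => abs_of_nonneg (hun j)
    have hsumlt : ∑ j, u j < ∑ j, v j := by
      rw [← hvsum]; rw [hYv] at hY; linarith
    have ⟨j, hj⟩ : ∃ j, u j < v j := by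
      by_contra hall
      push_neg at hall
      exact absurd (Finset.sum_le_sum fun j _ => hall j) (not_le.mpr hsumlt)
    set ε := min (η - l1 u) (v j - u j) with hε
    have hε0 : 0 < ε := lt_min (by linarith) (by linarith)
    refine proj_contra hu j (u j + ε) ?_ ?_
    · rw [l1_update]
      have h1 : |u j + ε| ≤ |u j| + ε := by
        calc |u j + ε| ≤ |u j| + |ε| := abs_add_le _ _
          _ = |u j| + ε := by rw [abs_of_pos hε0]
      have h2 : ε ≤ η - l1 u := min_le_left _ _
      linarith
    · have h3 : ε ≤ v j - u j := min_le_right _ _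
      nlinarith
end

section
/- Let v ∈ ℝᵐ with nonnegative entries and η ≥ 0 with ‖v‖₁ ≥ η. Then the Euclidean projection u of v onto the ℓ¹ ball of radius η satisfies ‖u‖₁ = η, and there exists λ ≥ 0 such that u_j = max(v_j − λ, 0) for all j. -/
open Finset

lemma sq_sum_eq {k : ℕ} (x z y : Fin k → ℝ) (h : dE x y = dE z y) :
    ∑ i, (x i - y i)^2 = ∑ i, (z i - y i)^2 := by
  have h1 : (0:ℝ) ≤ ∑ i, (x i - y i)^2 := by positivity
  have h2 : (0:ℝ) ≤ ∑ i, (z i - y i)^2 := by positivity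
  have := congrArg (fun t => t^2) h
  simpa [dE, l2, Real.sq_sqrt, h1, h2] using this

lemma dE_le_of_sq {k : ℕ} (x z y : Fin k → ℝ)
    (h : ∑ i, (x i - y i)^2 ≤ ∑ i, (z i - y i)^2) : dE x y ≤ dE z y :=
  Real.sqrt_le_sqrt h

theorem stmt11 {m : ℕ} (v : Fin m → ℝ) (hv : ∀ j, 0 ≤ v j) (η : ℝ)
    (hη : 0 ≤ η) (hvη : η ≤ l1 v)
    (u : Fin m → ℝ) (hu : IsProjOn (B1 η) v u) :
    l1 u = η ∧ ∃ lam : ℝ, 0 ≤ lam ∧ ∀ j, u j = max (v j - lam) 0 := by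
  classical
  set f : ℝ → ℝ := fun lam => ∑ j, max (v j - lam) 0 with hfdef
  have hcont : Continuous f := by
    apply continuous_finset_sum
    intro j _
    exact (continuous_const.sub continuous_id).max continuous_const
  have hf0 : f 0 = l1 v := by
    simp only [hfdef, l1, sub_zero]
    exact Finset.sum_congr rfl (fun j _ => by
      rw [max_eq_left (hv j), abs_of_nonneg (hv j)])
  have hl1v0 : 0 ≤ l1 v := le_trans hη hvη
  have hvle : ∀ j, v j ≤ l1 v := by
    intro j
    have : |v j| ≤ ∑ i, |v i| :=
      Finset.single_le_sum (f := fun i => |v i|) (fun i _ => abs_nonneg _) (Finset.mem_univ j)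
    rw [abs_of_nonneg (hv j)] at this
    exact this
  have hfb : f (l1 v) = 0 := by
    simp only [hfdef]
    apply Finset.sum_eq_zero
    intro j _
    exact max_eq_right (by linarith [hvle j])
  -- intermediate value theorem
  have hmem : η ∈ Set.Icc (f (l1 v)) (f 0) := by
    rw [hf0, hfb]; exact ⟨hη, hvη⟩
  obtain ⟨lam, hlamI, hlam⟩ :=
    intermediate_value_Icc' hl1v0 hcont.continuousOn hmem
  have hlam0 : 0 ≤ lam := hlamI.1
  set w : Fin m → ℝ := fun j => max (v j - lam) 0 with hwdef
  have hw0 : ∀ j, 0 ≤ w j := fun j => le_max_right _ _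
  have hl1w : l1 w = η := by
    rw [l1]
    rw [show ∑ j, |w j| = ∑ j, w j from
      Finset.sum_congr rfl (fun j _ => abs_of_nonneg (hw0 j))]
    exact hlam
  have hwB : w ∈ B1 η := le_of_eq hl1w
  -- |w j - v j| ≤ lam
  have habs : ∀ j, |w j - v j| ≤ lam := by
    intro j
    rcases le_or_gt lam (v j) with h | h
    · have : w j = v j - lam := max_eq_left (by linarith)
      rw [this]; simp [abs_of_nonpos, hlam0]
    · have : w j = 0 := max_eq_right (by linarith)
      rw [this]
      rw [abs_of_nonpos (by linarith [hv j])]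
      linarith [hv j]
  -- ∑ (w j - v j) * w j = -lam * η
  have hsum1 : ∑ j, (w j - v j) * w j = -lam * η := by
    have : ∀ j, (w j - v j) * w j = -lam * w j := by
      intro j
      rcases le_or_gt lam (v j) with h | h
      · have hw : w j = v j - lam := max_eq_left (by linarith)
        rw [hw]; ring
      · have hw : w j = 0 := max_eq_right (by linarith)
        rw [hw]; ring
    rw [Finset.sum_congr rfl (fun j _ => this j), ← Finset.mul_sum]
    rw [show ∑ j, w j = η from by
      rw [← hl1w, l1]
      exact (Finset.sum_congr rfl (fun j _ => (abs_of_nonneg (hw0 j)).symm))]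
  -- key inequality
  have hkey : ∀ z ∈ B1 η, 0 ≤ ∑ j, (w j - v j) * (z j - w j) := by
    intro z hz
    have hlow : -lam * η ≤ ∑ j, (w j - v j) * z j := by
      have h1 : ∀ j, -lam * |z j| ≤ (w j - v j) * z j := by
        intro j
        have := neg_abs_le ((w j - v j) * z j)
        have h2 : |(w j - v j) * z j| ≤ lam * |z j| := by
          rw [abs_mul]
          exact mul_le_mul_of_nonneg_right (habs j) (abs_nonneg _)
        nlinarith [abs_nonneg (z j)]
      calc -lam * η ≤ -lam * l1 z := by
            have : l1 z ≤ η := hz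
            nlinarith
        _ = ∑ j, -lam * |z j| := by rw [l1, Finset.mul_sum]
        _ ≤ ∑ j, (w j - v j) * z j := Finset.sum_le_sum (fun j _ => h1 j)
    have : ∑ j, (w j - v j) * (z j - w j)
        = (∑ j, (w j - v j) * z j) - ∑ j, (w j - v j) * w j := by
      rw [← Finset.sum_sub_distrib]
      exact Finset.sum_congr rfl (fun j _ => by ring)
    rw [this, hsum1]
    linarith
  -- w is a projection
  have hwproj : ∀ z ∈ B1 η, ∑ j, (w j - v j)^2 ≤ ∑ j, (z j - v j)^2 := by
    intro z hz
    have hexp : ∑ j, (z j - v j)^2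
        = ∑ j, (w j - v j)^2 + 2 * ∑ j, (w j - v j) * (z j - w j)
          + ∑ j, (z j - w j)^2 := by
      rw [Finset.mul_sum, ← Finset.sum_add_distrib, ← Finset.sum_add_distrib]
      exact Finset.sum_congr rfl (fun j _ => by ring)
    have h1 := hkey z hz
    have h2 : (0:ℝ) ≤ ∑ j, (z j - w j)^2 := by positivity
    linarith
  -- u = w
  obtain ⟨huB, humin⟩ := hu
  have heq : dE u v = dE w v :=
    le_antisymm (humin w hwB) (dE_le_of_sq w u v (hwproj u huB))
  have heqsq : ∑ j, (u j - v j)^2 = ∑ j, (w j - v j)^2 := sq_sum_eq u w v heq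
  -- midpoint argument
  set c : Fin m → ℝ := fun j => (u j + w j) / 2 with hcdef
  have hcB : c ∈ B1 η := by
    have : l1 c ≤ (l1 u + l1 w) / 2 := by
      rw [l1, l1, l1, ← Finset.sum_add_distrib]
      rw [Finset.sum_div]
      apply Finset.sum_le_sum
      intro j _
      rw [hcdef]
      calc |(u j + w j) / 2| = |u j + w j| / 2 := by
            rw [abs_div]; norm_num
        _ ≤ (|u j| + |w j|) / 2 := by
            have := abs_add_le (u j) (w j); linarith
    have huB' : l1 u ≤ η := huB
    calc l1 c ≤ (l1 u + l1 w) / 2 := this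
      _ ≤ η := by rw [hl1w]; linarith
  have hcle : ∑ j, (u j - v j)^2 ≤ ∑ j, (c j - v j)^2 := by
    have hle := humin c hcB
    have h1 : (0:ℝ) ≤ ∑ j, (u j - v j)^2 := by positivity
    have h2 : (0:ℝ) ≤ ∑ j, (c j - v j)^2 := by positivity
    have h3 : dE u v ^ 2 ≤ dE c v ^ 2 := by
      apply pow_le_pow_left₀ (Real.sqrt_nonneg _) hle
    simpa [dE, l2, Real.sq_sqrt, h1, h2] using h3
  have hpar : ∑ j, (c j - v j)^2
      = (∑ j, (u j - v j)^2 + ∑ j, (w j - v j)^2) / 2 - (∑ j, (u j - w j)^2) / 4 := by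
    rw [show (∑ j, (u j - v j)^2 + ∑ j, (w j - v j)^2) / 2
        = ∑ j, ((u j - v j)^2 + (w j - v j)^2) / 2 from by
      rw [← Finset.sum_add_distrib, Finset.sum_div],
      show (∑ j, (u j - w j)^2) / 4 = ∑ j, (u j - w j)^2 / 4 from
        Finset.sum_div _ _ _,
      ← Finset.sum_sub_distrib]
    exact Finset.sum_congr rfl (fun j _ => by rw [hcdef]; ring)
  have hsum0 : ∑ j, (u j - w j)^2 ≤ 0 := by
    rw [hpar, heqsq] at hcle
    linarith
  have huw : ∀ j, u j = w j := by
    intro j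
    have h1 : ∀ i ∈ Finset.univ, (0:ℝ) ≤ (u i - w i)^2 := fun i _ => sq_nonneg _
    have h2 : ∑ j, (u j - w j)^2 = 0 :=
      le_antisymm hsum0 (Finset.sum_nonneg h1)
    have := (Finset.sum_eq_zero_iff_of_nonneg h1).mp h2 j (Finset.mem_univ j)
    have := pow_eq_zero_iff (n := 2) (by norm_num) |>.mp this
    linarith
  constructor
  · rw [show u = w from funext huw]; exact hl1w
  · exact ⟨lam, hlam0, fun j => huw j⟩
end

section
/- The bi-level projection BP^{1,∞}_η is idempotent: for every Y ∈ ℝ^{n×m} and η ≥ 0, BP^{1,∞}_η(BP^{1,∞}_η(Y)) = BP^{1,∞}_η(Y). -/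
open Finset

open Classical in
/-- Euclidean projection onto the ℓ1 ball of radius `η` (defined by choice). -/
noncomputable def projL1 {k : ℕ} (η : ℝ) (v : Fin k → ℝ) : Fin k → ℝ :=
  if h : ∃ u : Fin k → ℝ, IsProjOn (B1 η) v u then h.choose else v

/-- The bi-level ℓ_{1,∞} projection. -/
noncomputable def BP {n m : ℕ} [NeZero n] (η : ℝ) (Y : Fin n → Fin m → ℝ) :
    Fin n → Fin m → ℝ :=
  fun i j => Real.sign (Y i j) * min |Y i j| (projL1 η (fun j => linf (col Y j)) j)

lemma real_sign_mul_abs (x : ℝ) : Real.sign x * |x| = x := by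
  rcases lt_trichotomy x 0 with h | h | h
  · rw [Real.sign_of_neg h, abs_of_neg h]; ring
  · simp [h, Real.sign_zero]
  · rw [Real.sign_of_pos h, abs_of_pos h, one_mul]

lemma dE_nonneg {k : ℕ} (x y : Fin k → ℝ) : 0 ≤ dE x y := Real.sqrt_nonneg _

lemma dE_self {k : ℕ} (x : Fin k → ℝ) : dE x x = 0 := by
  simp [dE, l2]

lemma eq_of_dE_le_zero {k : ℕ} {x y : Fin k → ℝ} (h : dE x y ≤ 0) : x = y := by
  have h0 : dE x y = 0 := le_antisymm h (dE_nonneg x y)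
  rw [dE, l2] at h0
  have hs : ∑ i, (x i - y i) ^ 2 = 0 :=
    le_antisymm (Real.sqrt_eq_zero'.mp h0)
      (Finset.sum_nonneg fun i _ => sq_nonneg _)
  funext i
  have := (Finset.sum_eq_zero_iff_of_nonneg
    (fun i (_ : i ∈ Finset.univ) => sq_nonneg (x i - y i))).mp hs i (Finset.mem_univ i)
  have : x i - y i = 0 := by nlinarith [this]
  linarith

lemma isProjOn_self {k : ℕ} {S : Set (Fin k → ℝ)} {u : Fin k → ℝ} (hu : u ∈ S) :
    IsProjOn S u u :=
  ⟨hu, fun z _ => by rw [dE_self]; exact dE_nonneg z u⟩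

lemma projL1_of_mem {k : ℕ} {η : ℝ} {u : Fin k → ℝ} (hu : u ∈ B1 η) :
    projL1 η u = u := by
  have hex : ∃ z : Fin k → ℝ, IsProjOn (B1 η) u z := ⟨u, isProjOn_self hu⟩
  rw [projL1, dif_pos hex]
  have hspec := hex.choose_spec
  have := hspec.2 u hu
  rw [dE_self] at this
  exact eq_of_dE_le_zero this

lemma linf_nonneg {k : ℕ} [NeZero k] (v : Fin k → ℝ) : 0 ≤ linf v := by
  obtain ⟨i⟩ := (inferInstance : Nonempty (Fin k))
  exact le_trans (abs_nonneg (v i)) (Finset.le_sup' (fun i => |v i|) (Finset.mem_univ i))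

lemma abs_le_linf {k : ℕ} [NeZero k] (v : Fin k → ℝ) (i : Fin k) : |v i| ≤ linf v :=
  Finset.le_sup' (fun i => |v i|) (Finset.mem_univ i)

lemma proj_bounds {k : ℕ} {η : ℝ} {v u : Fin k → ℝ} (h : IsProjOn (B1 η) v u)
    (hv : ∀ j, 0 ≤ v j) : ∀ j, 0 ≤ u j ∧ u j ≤ v j := by
  intro j
  by_contra hc
  set c : ℝ := max 0 (min (u j) (v j)) with hcdef
  set z : Fin k → ℝ := Function.update u j c with hz
  have hzj : z j = c := Function.update_self j c u
  have hzne : ∀ j', j' ≠ j → z j' = u j' := fun j' hj' => Function.update_of_ne hj' c u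
  have hcabs : |c| ≤ |u j| := by
    rw [abs_of_nonneg (le_max_left 0 _)]
    apply max_le (abs_nonneg _)
    exact le_trans (min_le_left _ _) (le_abs_self _)
  have hzB : z ∈ B1 η := by
    have : l1 z ≤ l1 u := by
      apply Finset.sum_le_sum
      intro j' _
      by_cases hj' : j' = j
      · subst hj'; rw [hzj]; exact hcabs
      · rw [hzne j' hj']
    exact le_trans this h.1
  have hj2 : (c - v j) ^ 2 < (u j - v j) ^ 2 := by
    push_neg at hc
    rcases lt_or_ge (u j) 0 with hneg | hpos
    · have hc0 : c = 0 := by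
        rw [hcdef]
        have : min (u j) (v j) ≤ 0 := le_trans (min_le_left _ _) hneg.le
        exact max_eq_left this
      rw [hc0]
      have := hv j
      nlinarith
    · have hlt : v j < u j := hc hpos
      have hc0 : c = v j := by
        rw [hcdef, min_comm, min_eq_left hlt.le]
        exact max_eq_right (hv j)
      rw [hc0]
      nlinarith
  have hsum : ∑ i, (z i - v i) ^ 2 < ∑ i, (u i - v i) ^ 2 := by
    apply Finset.sum_lt_sum
    · intro i _
      by_cases hi : i = j
      · subst hi; rw [hzj]; exact hj2.le
      · rw [hzne i hi]
    · exact ⟨j, Finset.mem_univ j, by rw [hzj]; exact hj2⟩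
  have hd : dE z v < dE u v := by
    apply Real.sqrt_lt_sqrt (Finset.sum_nonneg fun i _ => sq_nonneg _) hsum
  exact absurd (h.2 z hzB) (not_le.mpr hd)

theorem stmt12 {n m : ℕ} [NeZero n] (Y : Fin n → Fin m → ℝ) (η : ℝ) (hη : 0 ≤ η) :
    BP η (BP η Y) = BP η Y := by
  set v : Fin m → ℝ := fun j => linf (col Y j) with hv
  have hvnn : ∀ j, 0 ≤ v j := fun j => linf_nonneg _
  by_cases hex : ∃ u : Fin m → ℝ, IsProjOn (B1 η) v u
  · set u : Fin m → ℝ := hex.choose with hu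
    have huspec : IsProjOn (B1 η) v u := hex.choose_spec
    have hproj : projL1 η v = u := by rw [projL1, dif_pos hex]
    have hbnd := proj_bounds huspec hvnn
    set X : Fin n → Fin m → ℝ := BP η Y with hX
    have habsX : ∀ i j, |X i j| = min |Y i j| (u j) := by
      intro i j
      have hXij : X i j = Real.sign (Y i j) * min |Y i j| (u j) := by
        rw [hX, BP, hproj]
      rw [hXij]
      have hmnn : 0 ≤ min |Y i j| (u j) := le_min (abs_nonneg _) (hbnd j).1
      rcases lt_trichotomy (Y i j) 0 with hlt | heq | hgt
      · rw [Real.sign_of_neg hlt]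
        rw [abs_of_nonpos (by linarith [hmnn] : (-1 : ℝ) * min |Y i j| (u j) ≤ 0)]
        ring
      · rw [heq]; simp [Real.sign_zero, min_eq_left (hbnd j).1]
      · rw [Real.sign_of_pos hgt, one_mul, abs_of_nonneg hmnn]
    have hlinfX : (fun j => linf (col X j)) = u := by
      funext j
      apply le_antisymm
      · apply Finset.sup'_le
        intro i _
        show |col X j i| ≤ u j
        rw [col, habsX i j]
        exact min_le_right _ _
      · obtain ⟨i, _, hi⟩ := Finset.exists_mem_eq_sup' (Finset.univ_nonempty (α := Fin n))
          (fun i => |Y i j|)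
        have hvi : v j = |Y i j| := hi
        have : u j = min |Y i j| (u j) := by
          rw [min_eq_right]; rw [← hvi]; exact (hbnd j).2
        rw [this, ← habsX i j]
        exact Finset.le_sup' (fun i => |col X j i|) (Finset.mem_univ i)
    funext i j
    show Real.sign (X i j) * min |X i j| (projL1 η (fun j => linf (col X j)) j) = X i j
    rw [hlinfX, projL1_of_mem huspec.1]
    have hle : |X i j| ≤ u j := by rw [habsX]; exact min_le_right _ _
    rw [min_eq_left hle, real_sign_mul_abs]
  · have hproj : projL1 η v = v := by rw [projL1, dif_neg hex]
    have hXY : BP η Y = Y := by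
      funext i j
      show Real.sign (Y i j) * min |Y i j| (projL1 η v j) = Y i j
      have hle : |Y i j| ≤ v j := abs_le_linf (col Y j) i
      rw [hproj, min_eq_left hle, real_sign_mul_abs]
    rw [hXY]; exact hXY
end

section
/- Let y ∈ ℝⁿ, λ ≥ 0, and let x be the soft-thresholding of y at level λ (x_i = sign(y_i)·max(|y_i| − λ, 0)). Then x is the Euclidean projection of y onto the ℓ¹ ball of radius ‖x‖₁; equivalently, for every z with ‖z‖₁ ≤ ‖x‖₁, ‖x − z‖₂ ≤ ‖y − z‖₂. -/
open Finset

lemma soft_key (y lam : ℝ) (hlam : 0 ≤ lam) (x : ℝ)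
    (hx : x = Real.sign y * max (|y| - lam) 0) :
    |y - x| ≤ lam ∧ (y - x) * x = lam * |x| := by
  rcases le_or_gt |y| lam with h | h
  · have hm : max (|y| - lam) 0 = 0 := max_eq_right (by linarith)
    rw [hx, hm, mul_zero]
    constructor
    · simpa using h
    · simp
  · have hm : max (|y| - lam) 0 = |y| - lam := max_eq_left (by linarith)
    have hy : y ≠ 0 := by
      intro h0; rw [h0] at h; simp at h; linarith
    rcases lt_trichotomy y 0 with hneg | h0 | hpos
    · have hs : Real.sign y = -1 := Real.sign_of_neg hneg
      have hay : |y| = -y := abs_of_neg hneg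
      rw [hx, hm, hs, hay]
      constructor
      · rw [abs_of_nonpos (by nlinarith)]; nlinarith
      · rw [abs_of_nonpos (by nlinarith)]; ring
    · exact absurd h0 hy
    · have hs : Real.sign y = 1 := Real.sign_of_pos hpos
      have hay : |y| = y := abs_of_pos hpos
      rw [hx, hm, hs, hay]
      constructor
      · rw [abs_of_nonneg (by nlinarith)]; nlinarith
      · rw [abs_of_nonneg (by nlinarith)]; ring

theorem stmt19 {n : ℕ} (y : Fin n → ℝ) (lam : ℝ) (hlam : 0 ≤ lam)
    (x : Fin n → ℝ)
    (hx : ∀ i, x i = Real.sign (y i) * max (|y i| - lam) 0) :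
    IsProjOn (B1 (l1 x)) y x := by
  constructor
  · exact le_refl (l1 x)
  · intro z hz
    have key : ∀ i, |y i - x i| ≤ lam ∧ (y i - x i) * x i = lam * |x i| :=
      fun i => soft_key (y i) lam hlam (x i) (hx i)
    have hsum : ∑ i, (y i - x i) * (z i - x i) ≤ 0 := by
      have h1 : ∀ i, (y i - x i) * (z i - x i) ≤ lam * |z i| - lam * |x i| := by
        intro i
        have k := key i
        have hz1 : (y i - x i) * z i ≤ lam * |z i| := by
          calc (y i - x i) * z i ≤ |(y i - x i) * z i| := le_abs_self _
          _ = |y i - x i| * |z i| := abs_mul _ _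
          _ ≤ lam * |z i| := by
              apply mul_le_mul_of_nonneg_right k.1 (abs_nonneg _)
        nlinarith [k.2]
      calc ∑ i, (y i - x i) * (z i - x i) ≤ ∑ i, (lam * |z i| - lam * |x i|) :=
            Finset.sum_le_sum fun i _ => h1 i
        _ = lam * l1 z - lam * l1 x := by
            rw [Finset.sum_sub_distrib, ← Finset.mul_sum, ← Finset.mul_sum]; rfl
        _ ≤ 0 := by
            have : l1 z ≤ l1 x := hz
            nlinarith
    unfold dE l2
    apply Real.sqrt_le_sqrt
    have expand : ∑ i, (z i - y i) ^ 2 - ∑ i, (x i - y i) ^ 2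
        = ∑ i, (z i - x i) ^ 2 - 2 * ∑ i, (y i - x i) * (z i - x i) := by
      rw [← Finset.sum_sub_distrib, Finset.mul_sum, ← Finset.sum_sub_distrib]
      apply Finset.sum_congr rfl
      intro i _; ring
    have hsq : 0 ≤ ∑ i, (z i - x i) ^ 2 :=
      Finset.sum_nonneg fun i _ => sq_nonneg _
    linarith [expand]
end
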